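/- Let X ∈ ℝ^{d0×n} with X X^T invertible and P = (X X^T)^{1/2}, Y ∈ ℝ^{dL×n}, G ∈ ℝ^{d0×d0}, Z = Y X^T P^{-1}, G̃ = P^{-1} G, and λ > 0. Let B(λ) be the positive definite square root of I_{d0} + n λ G̃ G̃^T, set Z̄(λ) = Z B(λ)^{-1}, and let Z̄(λ) = Ū(λ) Σ̄(λ) V̄(λ)^T be a singular value decomposition with singular values in nonincreasing order. Then Ŵ(λ) = Ū_r(λ) Σ̄_r(λ) V̄_r(λ)^T B(λ)^{-1} P^{-1} is a minimizer of (1/n)‖W X − Y‖_F² + λ‖W G‖_F² over all W ∈ ℝ^{dL×d0} with rank(W) ≤ r. -/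

import Mathlib

open Matrix

/-- Squared Frobenius norm. -/
def frobSq {m n : Type*} [Fintype m] [Fintype n] (M : Matrix m n ℝ) : ℝ :=
  ∑ i, ∑ j, (M i j) ^ 2

/-- The `n × m` "diagonal" matrix with entries `sv 0, sv 1, …` on the main diagonal. -/
def pdiag (n m : ℕ) (sv : ℕ → ℝ) : Matrix (Fin n) (Fin m) ℝ :=
  Matrix.of fun i j => if (i : ℕ) = (j : ℕ) then sv i else 0

/-- The rank-`r` truncation of `pdiag`: only the first `r` diagonal entries are kept. -/
def pdiagTrunc (n m : ℕ) (sv : ℕ → ℝ) (r : ℕ) : Matrix (Fin n) (Fin m) ℝ :=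
  Matrix.of fun i j => if (i : ℕ) = (j : ℕ) ∧ (i : ℕ) < r then sv i else 0

lemma frobSq_eq_trace {m n : Type*} [Fintype m] [Fintype n] (M : Matrix m n ℝ) :
    frobSq M = Matrix.trace (Mᵀ * M) := by
  simp only [frobSq, Matrix.trace, Matrix.diag, Matrix.mul_apply, Matrix.transpose_apply, sq]
  exact Finset.sum_comm

lemma frobSq_eq_trace' {m n : Type*} [Fintype m] [Fintype n] (M : Matrix m n ℝ) :
    frobSq M = Matrix.trace (M * Mᵀ) := by
  rw [frobSq_eq_trace, Matrix.trace_mul_comm]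

lemma frobSq_nonneg {m n : Type*} [Fintype m] [Fintype n] (M : Matrix m n ℝ) :
    0 ≤ frobSq M :=
  Finset.sum_nonneg fun _ _ => Finset.sum_nonneg fun _ _ => sq_nonneg _

lemma frobSq_sub {m n : Type*} [Fintype m] [Fintype n] (A C : Matrix m n ℝ) :
    frobSq (A - C) = frobSq A - 2 * Matrix.trace (Aᵀ * C) + frobSq C := by
  have h : Matrix.trace (Cᵀ * A) = Matrix.trace (Aᵀ * C) := by
    rw [← Matrix.trace_transpose (Cᵀ * A), Matrix.transpose_mul, Matrix.transpose_transpose]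
  simp only [frobSq_eq_trace, Matrix.transpose_sub, Matrix.sub_mul, Matrix.mul_sub,
    Matrix.trace_sub]
  rw [h]; ring

lemma frobSq_orth_left {k m n : Type*} [Fintype k] [Fintype m] [Fintype n] [DecidableEq m]
    (U : Matrix k m ℝ) (hU : Uᵀ * U = 1) (A : Matrix m n ℝ) :
    frobSq (U * A) = frobSq A := by
  rw [frobSq_eq_trace, frobSq_eq_trace, Matrix.transpose_mul, Matrix.mul_assoc,
    ← Matrix.mul_assoc Uᵀ U A, hU, Matrix.one_mul]

lemma frobSq_transpose {m n : Type*} [Fintype m] [Fintype n] (M : Matrix m n ℝ) :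
    frobSq Mᵀ = frobSq M := by
  simp only [frobSq, Matrix.transpose_apply]
  exact Finset.sum_comm

lemma frobSq_orth_right {m n : Type*} [Fintype m] [Fintype n] [DecidableEq n]
    (V : Matrix n n ℝ) (hV : Vᵀ * V = 1) (A : Matrix m n ℝ) :
    frobSq (A * Vᵀ) = frobSq A := by
  rw [← frobSq_transpose (A * Vᵀ), Matrix.transpose_mul, Matrix.transpose_transpose,
    frobSq_orth_left V hV, frobSq_transpose]

lemma sum_trunc_le (m r : ℕ) (s t : ℕ → ℝ)
    (hs : ∀ i j : ℕ, i ≤ j → s j ≤ s i) (hs0 : ∀ i, 0 ≤ s i)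
    (ht0 : ∀ i, 0 ≤ t i) (ht1 : ∀ i, t i ≤ 1)
    (htsum : ∑ i ∈ Finset.range m, t i ≤ (r : ℝ)) :
    ∑ i ∈ Finset.Ico r m, s i ≤ ∑ i ∈ Finset.range m, s i * (1 - t i) := by
  have hnn : ∀ i ∈ Finset.range m, 0 ≤ s i * (1 - t i) := fun i _ =>
    mul_nonneg (hs0 i) (by linarith [ht1 i])
  rcases le_or_gt m r with h | h
  · rw [Finset.Ico_eq_empty (by omega)]
    simpa using Finset.sum_nonneg hnn
  · have hrm : r ≤ m := h.le
    have hsplit : ∑ i ∈ Finset.range r, s i * (1 - t i) + ∑ i ∈ Finset.Ico r m, s i * (1 - t i)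
        = ∑ i ∈ Finset.range m, s i * (1 - t i) := by
      rw [Finset.range_eq_Ico, Finset.range_eq_Ico]
      exact Finset.sum_Ico_consecutive _ (Nat.zero_le r) hrm
    have h1 : ∑ i ∈ Finset.Ico r m, s i * t i ≤ s r * ∑ i ∈ Finset.Ico r m, t i := by
      rw [Finset.mul_sum]
      exact Finset.sum_le_sum fun i hi =>
        mul_le_mul_of_nonneg_right (hs r i (Finset.mem_Ico.mp hi).1) (ht0 i)
    have h2 : ∑ i ∈ Finset.Ico r m, t i ≤ ∑ i ∈ Finset.range r, (1 - t i) := by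
      have e1 : ∑ i ∈ Finset.range r, (1 - t i) = (r : ℝ) - ∑ i ∈ Finset.range r, t i := by
        rw [Finset.sum_sub_distrib]; simp
      have e2 : ∑ i ∈ Finset.range r, t i + ∑ i ∈ Finset.Ico r m, t i
          = ∑ i ∈ Finset.range m, t i := by
        rw [Finset.range_eq_Ico, Finset.range_eq_Ico]
        exact Finset.sum_Ico_consecutive _ (Nat.zero_le r) hrm
      linarith
    have h3 : s r * ∑ i ∈ Finset.range r, (1 - t i) ≤ ∑ i ∈ Finset.range r, s i * (1 - t i) := by
      rw [Finset.mul_sum]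
      exact Finset.sum_le_sum fun i hi =>
        mul_le_mul_of_nonneg_right (hs i r (Finset.mem_range.mp hi).le) (by linarith [ht1 i])
    have h4 : s r * ∑ i ∈ Finset.Ico r m, t i ≤ s r * ∑ i ∈ Finset.range r, (1 - t i) :=
      mul_le_mul_of_nonneg_left h2 (hs0 r)
    have h5 : ∑ i ∈ Finset.Ico r m, s i
        = ∑ i ∈ Finset.Ico r m, s i * (1 - t i) + ∑ i ∈ Finset.Ico r m, s i * t i := by
      rw [← Finset.sum_add_distrib]
      exact Finset.sum_congr rfl fun i _ => by ring
    linarith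

lemma exists_projection (dL d0 : ℕ) (N : Matrix (Fin dL) (Fin d0) ℝ) :
    ∃ Pi : Matrix (Fin dL) (Fin dL) ℝ,
      Piᵀ = Pi ∧ Pi * Pi = Pi ∧ Pi * N = N ∧ Pi.trace = (N.rank : ℝ) := by
  classical
  let E := EuclideanSpace ℝ (Fin dL)
  let S : Submodule ℝ E := Submodule.span ℝ (Set.range fun c => WithLp.toLp 2 (Nᵀ c))
  have hk : Module.finrank ℝ S = N.rank := by
    rw [Matrix.rank_eq_finrank_span_cols]
    have hS : S = (Submodule.span ℝ (Set.range Nᵀ)).map (((EuclideanSpace.equiv (Fin dL) ℝ).symm.toLinearEquiv : (Fin dL → ℝ) ≃ₗ[ℝ] E) : (Fin dL → ℝ) →ₗ[ℝ] E) := by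
      rw [Submodule.map_span]; refine congrArg (Submodule.span ℝ) ?_; ext v; constructor
      · rintro ⟨c, rfl⟩; exact ⟨_, ⟨c, rfl⟩, rfl⟩
      · rintro ⟨_, ⟨c, rfl⟩, rfl⟩; exact ⟨c, rfl⟩
    rw [hS, LinearEquiv.finrank_map_eq]; rfl
  let b := stdOrthonormalBasis ℝ S
  let Q : Matrix (Fin dL) (Fin (Module.finrank ℝ S)) ℝ :=
    Matrix.of fun i j => ((b j : E) i)
  have hQ : Qᵀ * Q = 1 := by
    ext j j'
    have horth := b.orthonormal
    rw [orthonormal_iff_ite] at horth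
    have h1 := horth j j'
    rw [Submodule.coe_inner] at h1
    rw [PiLp.inner_apply] at h1
    simp only [RCLike.inner_apply, starRingEnd_apply, star_trivial] at h1
    simp only [Matrix.mul_apply, Matrix.one_apply, Matrix.transpose_apply, Matrix.of_apply, Q]
    rw [← h1]
    exact Finset.sum_congr rfl fun _ _ => mul_comm _ _
  have hexp : ∀ x : E, x ∈ S → ∀ i : Fin dL,
      ∑ j, (∑ l, (b j : E) l * x l) * (b j : E) i = x i := by
    intro x hx i
    have h := b.sum_repr' ⟨x, hx⟩
    have h2 := congrArg (Subtype.val) h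
    rw [Submodule.coe_sum] at h2
    have h3 := congrArg (fun v : E => v i) h2
    simp only [Submodule.coe_smul] at h3
    rw [← h3]
    rw [WithLp.ofLp_sum, Finset.sum_apply]
    apply Finset.sum_congr rfl
    intro j _
    rw [PiLp.smul_apply, Submodule.coe_inner, PiLp.inner_apply]
    simp only [RCLike.inner_apply, starRingEnd_apply, star_trivial, smul_eq_mul]
    congr 1; exact Finset.sum_congr rfl fun _ _ => mul_comm _ _
  refine ⟨Q * Qᵀ, by rw [Matrix.transpose_mul, Matrix.transpose_transpose], ?_, ?_, ?_⟩
  · rw [Matrix.mul_assoc, ← Matrix.mul_assoc Qᵀ Q Qᵀ, hQ, Matrix.one_mul]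
  · ext i c
    have hcol : WithLp.toLp 2 (fun l => N l c) ∈ S := Submodule.subset_span ⟨c, rfl⟩
    have := hexp (WithLp.toLp 2 (fun l => N l c)) hcol i
    simp only [WithLp.ofLp_toLp] at this
    simp only [Matrix.mul_apply, Matrix.transpose_apply, Matrix.of_apply, Q]
    rw [← this]
    simp only [Finset.sum_mul]
    rw [Finset.sum_comm]
    exact Finset.sum_congr rfl fun j _ => Finset.sum_congr rfl fun l _ => by ring
  · rw [Matrix.trace_mul_comm, hQ, Matrix.trace_one, ← hk]
    simp

-- computation B
lemma frobSq_trunc_sub_diag (dL d0 r : ℕ) (sv : ℕ → ℝ) :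
    frobSq (pdiagTrunc dL d0 sv r - pdiag dL d0 sv)
      = ∑ j ∈ Finset.Ico r (min dL d0), sv j ^ 2 := by
  rw [frobSq, Finset.sum_comm]
  have hterm : ∀ j : Fin d0, (∑ i, ((pdiagTrunc dL d0 sv r - pdiag dL d0 sv) i j) ^ 2)
      = if (j : ℕ) < dL ∧ r ≤ (j : ℕ) then sv (j : ℕ) ^ 2 else 0 := by
    intro j
    by_cases h : (j : ℕ) < dL
    · rw [Finset.sum_eq_single (⟨(j : ℕ), h⟩ : Fin dL)]
      · simp only [Matrix.sub_apply, pdiagTrunc, pdiag, Matrix.of_apply]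
        by_cases hr : (j : ℕ) < r
        · simp [hr, not_le.mpr hr]
        · simp [hr, not_lt.mp hr, h]
      · intro i _ hi
        have hne : (i : ℕ) ≠ (j : ℕ) := fun hc => hi (Fin.ext hc)
        simp [Matrix.sub_apply, pdiagTrunc, pdiag, hne]
      · simp
    · rw [Finset.sum_eq_zero, if_neg (fun hc => h hc.1)]
      intro i _
      have hne : (i : ℕ) ≠ (j : ℕ) := by omega
      simp [Matrix.sub_apply, pdiagTrunc, pdiag, hne]
  rw [Finset.sum_congr rfl fun j _ => hterm j]
  rw [Fin.sum_univ_eq_sum_range (fun j => if j < dL ∧ r ≤ j then sv j ^ 2 else 0) d0]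
  rw [show Finset.Ico r (min dL d0) = Finset.filter (fun j => j < dL ∧ r ≤ j) (Finset.range d0) by
    ext x; simp [Finset.mem_Ico, Finset.mem_filter, Finset.mem_range]; omega]
  rw [Finset.sum_filter]

lemma eckart_young_diag (dL d0 r : ℕ) (sv : ℕ → ℝ)
    (hmono : ∀ i j : ℕ, i ≤ j → sv j ≤ sv i) (hnn : ∀ i, 0 ≤ sv i)
    (N : Matrix (Fin dL) (Fin d0) ℝ) (hN : N.rank ≤ r) :
    frobSq (pdiagTrunc dL d0 sv r - pdiag dL d0 sv) ≤ frobSq (N - pdiag dL d0 sv) := by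
  classical
  obtain ⟨Pi, hsym, hidem, hPiN, htr⟩ := exists_projection dL d0 N
  set D := pdiag dL d0 sv with hD
  set m := min dL d0 with hm
  -- (1-Pi) is symmetric idempotent
  have e2 : (1 - Pi)ᵀ * (1 - Pi) = 1 - Pi := by
    rw [Matrix.transpose_sub, Matrix.transpose_one, hsym, Matrix.sub_mul, Matrix.mul_sub,
      Matrix.mul_sub, Matrix.one_mul, Matrix.mul_one, hidem]
    simp
  have e1 : Piᵀ * Pi = Pi := by rw [hsym, hidem]
  -- diagonal entries of Pi
  have hdiag_sq : ∀ i : Fin dL, Pi i i = ∑ k, (Pi i k) ^ 2 := by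
    intro i
    have := congrFun (congrFun hidem i) i
    rw [Matrix.mul_apply] at this
    rw [← this]
    apply Finset.sum_congr rfl
    intro k _
    have hk : Pi k i = Pi i k := by
      have := congrFun (congrFun hsym i) k
      simpa [Matrix.transpose_apply] using this
    rw [hk]; ring
  have hdiag0 : ∀ i : Fin dL, 0 ≤ Pi i i := fun i => by
    rw [hdiag_sq i]; exact Finset.sum_nonneg fun _ _ => sq_nonneg _
  have hdiag1 : ∀ i : Fin dL, Pi i i ≤ 1 := by
    intro i
    have h1 : (Pi i i) ^ 2 ≤ Pi i i := by
      nth_rewrite 2 [hdiag_sq i]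
      exact Finset.single_le_sum (fun k _ => sq_nonneg (Pi i k)) (Finset.mem_univ i)
    nlinarith
  -- the t function
  set t : ℕ → ℝ := fun j => if h : j < dL then Pi ⟨j, h⟩ ⟨j, h⟩ else 0 with htdef
  have ht0 : ∀ j, 0 ≤ t j := by
    intro j; simp only [htdef]; split
    · exact hdiag0 _
    · exact le_rfl
  have ht1 : ∀ j, t j ≤ 1 := by
    intro j; simp only [htdef]; split
    · exact hdiag1 _
    · exact zero_le_one
  have htsum : ∑ j ∈ Finset.range m, t j ≤ (r : ℝ) := by
    have h1 : ∑ j ∈ Finset.range m, t j ≤ ∑ j ∈ Finset.range dL, t j :=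
      Finset.sum_le_sum_of_subset_of_nonneg
        (Finset.range_subset_range.mpr (min_le_left _ _)) (fun i _ _ => ht0 i)
    have h2 : ∑ j ∈ Finset.range dL, t j = Pi.trace := by
      rw [← Fin.sum_univ_eq_sum_range t dL]
      apply Finset.sum_congr rfl
      intro i _
      simp only [htdef, Matrix.trace, Matrix.diag]
      rw [dif_pos i.isLt]
    have h3 : (N.rank : ℝ) ≤ (r : ℝ) := by exact_mod_cast hN
    rw [h2, htr] at h1
    linarith
  set Qm : Matrix (Fin dL) (Fin dL) ℝ := 1 - Pi with hQm
  -- computation A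
  have hA : frobSq (Qm * D) = ∑ j ∈ Finset.range m, sv j ^ 2 * (1 - t j) := by
    rw [frobSq, Finset.sum_comm]
    have hterm : ∀ j : Fin d0, (∑ i, ((Qm * D) i j) ^ 2)
        = if (j : ℕ) < dL then sv (j : ℕ) ^ 2 * (1 - t (j : ℕ)) else 0 := by
      intro j
      by_cases h : (j : ℕ) < dL
      · have hMij : ∀ i, (Qm * D) i j = Qm i ⟨(j : ℕ), h⟩ * sv (j : ℕ) := by
          intro i
          rw [Matrix.mul_apply, Finset.sum_eq_single (⟨(j : ℕ), h⟩ : Fin dL)]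
          · simp [hD, pdiag]
          · intro k _ hk
            have hne : (k : ℕ) ≠ (j : ℕ) := fun hc => hk (Fin.ext hc)
            simp [hD, pdiag, hne]
          · simp
        rw [if_pos h, Finset.sum_congr rfl fun i _ => by rw [hMij i]]
        have hsum : ∑ i, (Qm i ⟨(j : ℕ), h⟩) ^ 2 = 1 - Pi ⟨(j : ℕ), h⟩ ⟨(j : ℕ), h⟩ := by
          have := congrFun (congrFun e2 ⟨(j : ℕ), h⟩) ⟨(j : ℕ), h⟩
          rw [Matrix.mul_apply] at this
          rw [show (1 : ℝ) - Pi ⟨(j : ℕ), h⟩ ⟨(j : ℕ), h⟩ = Qm ⟨(j : ℕ), h⟩ ⟨(j : ℕ), h⟩ by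
            rw [hQm]; simp [Matrix.sub_apply, Matrix.one_apply]]
          rw [← this]
          refine Finset.sum_congr rfl fun k _ => ?_
          rw [Matrix.transpose_apply]
          ring
        have ht : t (j : ℕ) = Pi ⟨(j : ℕ), h⟩ ⟨(j : ℕ), h⟩ := by
          simp only [htdef]; rw [dif_pos h]
        rw [ht, ← hsum, Finset.mul_sum]
        refine Finset.sum_congr rfl fun i _ => by ring
      · rw [if_neg h, Finset.sum_eq_zero]
        intro i _
        have hz : (Qm * D) i j = 0 := by
          rw [Matrix.mul_apply, Finset.sum_eq_zero]
          intro k _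
          have hne : (k : ℕ) ≠ (j : ℕ) := by omega
          simp [hD, pdiag, hne]
        rw [hz]; simp
    rw [Finset.sum_congr rfl fun j _ => hterm j]
    rw [Fin.sum_univ_eq_sum_range (fun j => if j < dL then sv j ^ 2 * (1 - t j) else 0) d0]
    rw [show Finset.range m = Finset.filter (fun j => j < dL) (Finset.range d0) by
      ext x; simp [Finset.mem_filter, Finset.mem_range, hm]; omega]
    rw [Finset.sum_filter]
  -- decomposition inequality: frobSq ((1-Pi)*D) ≤ frobSq (N - D)
  have hdecomp : frobSq (Qm * D) ≤ frobSq (N - D) := by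
    have hneg : Qm * (N - D) = -(Qm * D) := by
      rw [hQm, Matrix.mul_sub, Matrix.sub_mul, Matrix.sub_mul, Matrix.one_mul, hPiN]
      abel
    have hsplit : frobSq (N - D) = frobSq (Pi * (N - D)) + frobSq (Qm * (N - D)) := by
      rw [frobSq_eq_trace, frobSq_eq_trace, frobSq_eq_trace]
      rw [Matrix.transpose_mul, Matrix.transpose_mul]
      rw [Matrix.mul_assoc, ← Matrix.mul_assoc Piᵀ Pi (N - D), e1]
      rw [Matrix.mul_assoc, ← Matrix.mul_assoc (Qmᵀ) Qm (N - D), e2]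
      rw [← Matrix.trace_add, ← Matrix.mul_add, ← Matrix.add_mul, hQm]
      simp
    have hfneg : frobSq (-(Qm * D)) = frobSq (Qm * D) := by
      simp [frobSq]
    calc frobSq (Qm * D) = frobSq (Qm * (N - D)) := by rw [hneg, hfneg]
      _ ≤ frobSq (N - D) := by
          rw [hsplit]
          have := frobSq_nonneg (Pi * (N - D))
          linarith
  -- final chain
  have hkey := sum_trunc_le m r (fun j => sv j ^ 2) t
    (fun i j hij => pow_le_pow_left₀ (hnn j) (hmono i j hij) 2)
    (fun i => sq_nonneg _) ht0 ht1 htsum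
  rw [frobSq_trunc_sub_diag dL d0 r sv]
  calc ∑ j ∈ Finset.Ico r (dL ⊓ d0), sv j ^ 2
      ≤ ∑ j ∈ Finset.range m, sv j ^ 2 * (1 - t j) := hkey
    _ = frobSq (Qm * D) := hA.symm
    _ ≤ frobSq (N - D) := hdecomp

/-- **Proposition `global_optima_reg`.** With `P = (X Xᵀ)^{1/2}` positive
definite, `Z = Y Xᵀ P⁻¹`, `G̃ = P⁻¹ G`, `λ > 0`, `B(λ)` the positive definite square
root of `I + n λ G̃ G̃ᵀ`, `Z̄(λ) = Z B(λ)⁻¹` with SVD `Ū Σ̄ V̄ᵀ` (singular values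
nonincreasing), the matrix `Ŵ(λ) = Ū_r Σ̄_r V̄_rᵀ B(λ)⁻¹ P⁻¹` is a minimizer of
`(1/n)‖W X − Y‖_F² + λ‖W G‖_F²` over all `W` with `rank W ≤ r`. -/
theorem global_optima_regularized (d0 dL n : ℕ)
    (X : Matrix (Fin d0) (Fin n) ℝ) (Y : Matrix (Fin dL) (Fin n) ℝ)
    (G : Matrix (Fin d0) (Fin d0) ℝ)
    (P : Matrix (Fin d0) (Fin d0) ℝ) (hP : P.PosDef) (hPsq : P * P = X * Xᵀ)
    (lam : ℝ) (hlam : 0 < lam)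
    (B : Matrix (Fin d0) (Fin d0) ℝ) (hB : B.PosDef)
    (hBsq : B * B = 1 + ((n : ℝ) * lam) • ((P⁻¹ * G) * (P⁻¹ * G)ᵀ))
    (r : ℕ)
    (U : Matrix (Fin dL) (Fin dL) ℝ) (V : Matrix (Fin d0) (Fin d0) ℝ) (sv : ℕ → ℝ)
    (hU : Uᵀ * U = 1) (hV : Vᵀ * V = 1)
    (hsv_mono : ∀ i j : ℕ, i ≤ j → sv j ≤ sv i) (hsv_nonneg : ∀ i, 0 ≤ sv i)
    (hSVD : Y * Xᵀ * P⁻¹ * B⁻¹ = U * pdiag dL d0 sv * Vᵀ) :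
    (U * pdiagTrunc dL d0 sv r * Vᵀ * B⁻¹ * P⁻¹).rank ≤ r ∧
    ∀ W : Matrix (Fin dL) (Fin d0) ℝ, W.rank ≤ r →
      (1 / (n : ℝ)) * frobSq ((U * pdiagTrunc dL d0 sv r * Vᵀ * B⁻¹ * P⁻¹) * X - Y)
          + lam * frobSq ((U * pdiagTrunc dL d0 sv r * Vᵀ * B⁻¹ * P⁻¹) * G)
        ≤ (1 / (n : ℝ)) * frobSq (W * X - Y) + lam * frobSq (W * G) := by
  classical
  -- rank of the truncated diagonal
  have hrankT : (pdiagTrunc dL d0 sv r).rank ≤ r := by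
    let Tl : Matrix (Fin dL) (Fin r) ℝ := Matrix.of fun i j => if (i : ℕ) = (j : ℕ) then sv i else 0
    let Tr : Matrix (Fin r) (Fin d0) ℝ := Matrix.of fun i j => if (i : ℕ) = (j : ℕ) then 1 else 0
    have hfact : pdiagTrunc dL d0 sv r = Tl * Tr := by
      ext i j
      rw [Matrix.mul_apply]
      by_cases hir : (i : ℕ) < r
      · rw [Finset.sum_eq_single (⟨(i : ℕ), hir⟩ : Fin r)]
        · by_cases hij : (i : ℕ) = (j : ℕ)
          · simp [pdiagTrunc, Tl, Tr, hij, hir, hij ▸ hir]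
          · simp [pdiagTrunc, Tl, Tr, hij]
        · intro k _ hk
          have hne : (i : ℕ) ≠ (k : ℕ) := fun hc => hk (Fin.ext hc.symm)
          simp [Tl, Tr, hne]
        · simp
      · rw [Finset.sum_eq_zero]
        · simp only [pdiagTrunc, Matrix.of_apply]
          rw [if_neg (fun hc => hir hc.2)]
        · intro k _
          have hne : (i : ℕ) ≠ (k : ℕ) := by omega
          simp [Tl, Tr, hne]
    rw [hfact]
    exact le_trans (Matrix.rank_mul_le_left Tl Tr) (Matrix.rank_le_width Tl)
  have hrankW : (U * pdiagTrunc dL d0 sv r * Vᵀ * B⁻¹ * P⁻¹).rank ≤ r := by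
    refine le_trans (Matrix.rank_mul_le_left _ _) ?_
    refine le_trans (Matrix.rank_mul_le_left _ _) ?_
    refine le_trans (Matrix.rank_mul_le_left _ _) ?_
    exact le_trans (Matrix.rank_mul_le_right _ _) hrankT
  refine ⟨hrankW, ?_⟩
  -- the degenerate case d0 = 0
  rcases Nat.eq_zero_or_pos d0 with hd0 | hd0
  · subst hd0
    intro W _
    have h1 : ∀ W' : Matrix (Fin dL) (Fin 0) ℝ, W' * X = 0 := by
      intro W'; ext i j; simp [Matrix.mul_apply]
    have h2 : ∀ W' : Matrix (Fin dL) (Fin 0) ℝ, frobSq (W' * G) = 0 := by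
      intro W'; simp [frobSq]
    rw [h1, h1, h2, h2]
  -- nondegenerate case
  have hPt : Pᵀ = P := by
    rw [← Matrix.conjTranspose_eq_transpose_of_trivial]; exact hP.isHermitian
  have hBt : Bᵀ = B := by
    rw [← Matrix.conjTranspose_eq_transpose_of_trivial]; exact hB.isHermitian
  have hPdet : IsUnit P.det := isUnit_iff_ne_zero.mpr hP.det_pos.ne'
  have hBdet : IsUnit B.det := isUnit_iff_ne_zero.mpr hB.det_pos.ne'
  have hPP' : P * P⁻¹ = 1 := Matrix.mul_nonsing_inv P hPdet
  have hP'P : P⁻¹ * P = 1 := Matrix.nonsing_inv_mul P hPdet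
  have hBB' : B * B⁻¹ = 1 := Matrix.mul_nonsing_inv B hBdet
  have hB'B : B⁻¹ * B = 1 := Matrix.nonsing_inv_mul B hBdet
  have hPinvT : (P⁻¹)ᵀ = P⁻¹ := by rw [Matrix.transpose_nonsing_inv, hPt]
  have hn : 0 < n := by
    rcases Nat.eq_zero_or_pos n with hn0 | hn0
    · exfalso
      subst hn0
      have hXXt : X * Xᵀ = 0 := by ext i j; simp [Matrix.mul_apply]
      rw [hXXt] at hPsq
      have hdet : P.det * P.det = 0 := by
        rw [← Matrix.det_mul, hPsq]
        exact (haveI : Nonempty (Fin d0) := ⟨⟨0, hd0⟩⟩; Matrix.det_zero)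
      have := hP.det_pos
      nlinarith
    · exact hn0
  -- cancel helpers
  have cP : ∀ {α : Type} (Z : Matrix (Fin d0) α ℝ), P * (P⁻¹ * Z) = Z := by
    intro α Z; rw [← Matrix.mul_assoc, hPP', Matrix.one_mul]
  have cP' : ∀ {α : Type} (Z : Matrix (Fin d0) α ℝ), P⁻¹ * (P * Z) = Z := by
    intro α Z; rw [← Matrix.mul_assoc, hP'P, Matrix.one_mul]
  set T := pdiagTrunc dL d0 sv r with hT
  set D := pdiag dL d0 sv with hD
  set K := P * B with hK
  set Zb := Y * Xᵀ * P⁻¹ * B⁻¹ with hZb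
  -- key quadratic identity for K
  have hPBsq : K * Kᵀ = X * Xᵀ + ((n : ℝ) * lam) • (G * Gᵀ) := by
    have h1 : K * Kᵀ = P * ((B * B) * P) := by
      rw [hK, Matrix.transpose_mul, hBt, hPt, Matrix.mul_assoc, ← Matrix.mul_assoc B B P]
    rw [h1, hBsq, Matrix.add_mul, Matrix.one_mul, Matrix.mul_add, hPsq]
    congr 1
    rw [Matrix.smul_mul, mul_smul_comm]
    congr 1
    rw [Matrix.transpose_mul, hPinvT]
    simp only [Matrix.mul_assoc]
    rw [hP'P, Matrix.mul_one, cP]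
  -- the objective identity
  have hobj : ∀ W' : Matrix (Fin dL) (Fin d0) ℝ,
      frobSq (W' * X - Y) + ((n : ℝ) * lam) * frobSq (W' * G)
        = frobSq (W' * K - Zb) + (frobSq Y - frobSq Zb) := by
    intro W'
    rw [frobSq_sub, frobSq_sub]
    have e1 : frobSq (W' * K) = frobSq (W' * X) + ((n : ℝ) * lam) * frobSq (W' * G) := by
      rw [frobSq_eq_trace' (W' * K), frobSq_eq_trace' (W' * X), frobSq_eq_trace' (W' * G)]
      have gX : ((W' * X) * (W' * X)ᵀ) = W' * (X * (Xᵀ * W'ᵀ)) := by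
        rw [Matrix.transpose_mul]; simp only [Matrix.mul_assoc]
      have gG : ((W' * G) * (W' * G)ᵀ) = W' * (G * (Gᵀ * W'ᵀ)) := by
        rw [Matrix.transpose_mul]; simp only [Matrix.mul_assoc]
      have gK : ((W' * K) * (W' * K)ᵀ)
          = W' * (X * (Xᵀ * W'ᵀ)) + ((n : ℝ) * lam) • (W' * (G * (Gᵀ * W'ᵀ))) := by
        rw [Matrix.transpose_mul]
        rw [Matrix.mul_assoc, ← Matrix.mul_assoc K Kᵀ W'ᵀ, hPBsq, Matrix.add_mul,
          Matrix.smul_mul, Matrix.mul_add, Matrix.mul_smul]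
        simp only [Matrix.mul_assoc]
      rw [gX, gG, gK, Matrix.trace_add, Matrix.trace_smul, smul_eq_mul]
    have e2 : Matrix.trace ((W' * K)ᵀ * Zb) = Matrix.trace ((W' * X)ᵀ * Y) := by
      calc ((W' * K)ᵀ * Zb).trace
          = (B * ((P * W'ᵀ) * Zb)).trace := by
            rw [hK, Matrix.transpose_mul, Matrix.transpose_mul, hBt, hPt]
            simp only [Matrix.mul_assoc]
        _ = ((P * W'ᵀ) * (Zb * B)).trace := by
            rw [Matrix.trace_mul_comm, Matrix.mul_assoc]
        _ = ((P * W'ᵀ) * (Y * (Xᵀ * P⁻¹))).trace := by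
            congr 1
            rw [hZb]
            simp only [Matrix.mul_assoc]
            rw [hB'B, Matrix.mul_one]
        _ = (W'ᵀ * ((Y * (Xᵀ * P⁻¹)) * P)).trace := by
            rw [Matrix.mul_assoc, Matrix.trace_mul_comm P, Matrix.mul_assoc]
        _ = (W'ᵀ * (Y * Xᵀ)).trace := by
            congr 2
            simp only [Matrix.mul_assoc]
            rw [hP'P, Matrix.mul_one]
        _ = ((W' * X)ᵀ * Y).trace := by
            rw [Matrix.transpose_mul, Matrix.mul_assoc, ← Matrix.mul_assoc W'ᵀ Y Xᵀ,
              Matrix.trace_mul_comm]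
    rw [e1, e2]
    ring
  -- candidate identities
  have hWhK : (U * T * Vᵀ * B⁻¹ * P⁻¹) * K = U * T * Vᵀ := by
    rw [hK]
    simp only [Matrix.mul_assoc]
    rw [cP' B, hB'B, Matrix.mul_one]
  have hZbUDV : Zb = U * (D * Vᵀ) := by
    rw [hSVD]
    simp only [Matrix.mul_assoc]
  have hUUt : U * Uᵀ = 1 := mul_eq_one_comm.mp hU
  have hVVt : V * Vᵀ = 1 := mul_eq_one_comm.mp hV
  intro W hW
  -- main comparison
  have hmain : frobSq ((U * T * Vᵀ * B⁻¹ * P⁻¹) * K - Zb) ≤ frobSq (W * K - Zb) := by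
    set M := Uᵀ * (W * K) * V with hM
    have hfact : W * K - Zb = U * ((M - D) * Vᵀ) := by
      rw [hZbUDV, hM, Matrix.sub_mul, Matrix.mul_sub]
      congr 1
      symm
      calc U * ((Uᵀ * (W * K) * V) * Vᵀ) = (U * Uᵀ) * ((W * K) * (V * Vᵀ)) := by
            simp only [Matrix.mul_assoc]
        _ = W * K := by rw [hUUt, hVVt, Matrix.mul_one, Matrix.one_mul]
    have hrank : M.rank ≤ r :=
      le_trans (Matrix.rank_mul_le_left _ _)
        (le_trans (Matrix.rank_mul_le_right Uᵀ (W * K))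
          (le_trans (Matrix.rank_mul_le_left W K) hW))
    have h1 : frobSq (W * K - Zb) = frobSq (M - D) := by
      rw [hfact, frobSq_orth_left U hU, frobSq_orth_right V hV]
    have h2 : frobSq ((U * T * Vᵀ * B⁻¹ * P⁻¹) * K - Zb) = frobSq (T - D) := by
      rw [hWhK, hZbUDV]
      have hh : U * T * Vᵀ - U * (D * Vᵀ) = U * ((T - D) * Vᵀ) := by
        rw [Matrix.sub_mul, Matrix.mul_sub]
        simp only [Matrix.mul_assoc]
      rw [hh, frobSq_orth_left U hU, frobSq_orth_right V hV]
    rw [h1, h2, hT, hD]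
    exact eckart_young_diag dL d0 r sv hsv_mono hsv_nonneg M hrank
  -- conclusion
  have hnpos : (0 : ℝ) < n := by exact_mod_cast hn
  have expand : ∀ W' : Matrix (Fin dL) (Fin d0) ℝ,
      (1 / (n : ℝ)) * frobSq (W' * X - Y) + lam * frobSq (W' * G)
        = (1 / (n : ℝ)) * (frobSq (W' * X - Y) + ((n : ℝ) * lam) * frobSq (W' * G)) := by
    intro W'
    field_simp
  rw [expand, expand]
  apply mul_le_mul_of_nonneg_left _ (by positivity)
  rw [hobj (U * T * Vᵀ * B⁻¹ * P⁻¹), hobj W]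
  linarith [hmain]
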